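/- The toric ideal I_A is generated by its indispensable binomials if and only if every Betti A-degree of I_A is a minimal binomial A-degree and the A-graded Betti number β_{0,b} equals 1 for every Betti A-degree b. -/

import Mathlib

open MvPolynomial

noncomputable section

/-- The `A`-degree of a monomial exponent vector `u`. -/
def degA {m n : ℕ} (A : Fin m → Fin n → ℤ) (u : Fin m →₀ ℕ) : Fin n → ℤ :=
  ∑ i, (u i : ℤ) • A i

/-- The affine semigroup `ℕA` is pointed. -/
def IsPointed {m n : ℕ} (A : Fin m → Fin n → ℤ) : Prop :=
  ∀ u v : Fin m →₀ ℕ, degA A u + degA A v = 0 → degA A u = 0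

/-- The toric ideal `I_A`. -/
def toricIdeal (K : Type*) [Field K] {m n : ℕ} (A : Fin m → Fin n → ℤ) :
    Ideal (MvPolynomial (Fin m) K) :=
  Ideal.span {f | ∃ u v : Fin m →₀ ℕ, degA A u = degA A v ∧
    f = monomial u (1 : K) - monomial v 1}

/-- `b` belongs to the affine semigroup `ℕA`. -/
def inNA {m n : ℕ} (A : Fin m → Fin n → ℤ) (b : Fin n → ℤ) : Prop :=
  ∃ u : Fin m →₀ ℕ, degA A u = b

/-- `c` is strictly smaller than `b` in the natural partial order on `ℕA`. -/
def ltA {m n : ℕ} (A : Fin m → Fin n → ℤ) (c b : Fin n → ℤ) : Prop :=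
  (∃ e, inNA A e ∧ b = c + e) ∧ c ≠ b

/-- The ideal `I_{A,b}` generated by binomials of `A`-degree strictly less than `b`. -/
def subIdeal (K : Type*) [Field K] {m n : ℕ} (A : Fin m → Fin n → ℤ) (b : Fin n → ℤ) :
    Ideal (MvPolynomial (Fin m) K) :=
  Ideal.span {f | ∃ u v : Fin m →₀ ℕ, degA A u = degA A v ∧ ltA A (degA A u) b ∧
    f = monomial u (1 : K) - monomial v 1}

/-- The graph `G(b)` on the fiber `deg_A^{-1}(b)`. -/
def fiberGraph (K : Type*) [Field K] {m n : ℕ} (A : Fin m → Fin n → ℤ) (b : Fin n → ℤ) :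
    SimpleGraph {u : Fin m →₀ ℕ // degA A u = b} where
  Adj x y := x ≠ y ∧ monomial x.1 (1 : K) - monomial y.1 1 ∈ subIdeal K A b
  symm := ⟨by
    rintro x y ⟨hne, hmem⟩
    exact ⟨hne.symm, by simpa [neg_sub] using neg_mem hmem⟩⟩
  loopless := ⟨fun x h => h.1 rfl⟩

/-- A set of binomials of `I_A`. -/
def IsBinomialSet (K : Type*) [Field K] {m n : ℕ} (A : Fin m → Fin n → ℤ)
    (S : Set (MvPolynomial (Fin m) K)) : Prop :=
  ∀ f ∈ S, ∃ u v : Fin m →₀ ℕ, degA A u = degA A v ∧ f = monomial u (1 : K) - monomial v 1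

/-- A minimal system of binomial generators of `I_A`. -/
def IsMinimalGenSet (K : Type*) [Field K] {m n : ℕ} (A : Fin m → Fin n → ℤ)
    (S : Set (MvPolynomial (Fin m) K)) : Prop :=
  IsBinomialSet K A S ∧ Ideal.span S = toricIdeal K A ∧
    ∀ T : Set (MvPolynomial (Fin m) K), T ⊂ S → Ideal.span T ≠ toricIdeal K A

/-- `b` is a Betti `A`-degree. -/
def IsBettiDegree (K : Type*) [Field K] {m n : ℕ} (A : Fin m → Fin n → ℤ)
    (b : Fin n → ℤ) : Prop :=
  ∃ S, IsMinimalGenSet K A S ∧ ∃ u v : Fin m →₀ ℕ, degA A u = b ∧ degA A v = b ∧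
    monomial u (1 : K) - monomial v 1 ∈ S

/-- `b` is the `A`-degree of a nonzero binomial of `I_A`. -/
def IsBinomialDegree {m n : ℕ} (A : Fin m → Fin n → ℤ) (b : Fin n → ℤ) : Prop :=
  ∃ u v : Fin m →₀ ℕ, u ≠ v ∧ degA A u = b ∧ degA A v = b

/-- `b` is a minimal binomial `A`-degree. -/
def IsMinimalBinomialDegree {m n : ℕ} (A : Fin m → Fin n → ℤ) (b : Fin n → ℤ) : Prop :=
  IsBinomialDegree A b ∧ ∀ c, IsBinomialDegree A c → ¬ ltA A c b

/-- An indispensable binomial of `I_A`: it belongs, up to sign, to every binomial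
generating set of `I_A`. -/
def IsIndispensableBinomial (K : Type*) [Field K] {m n : ℕ} (A : Fin m → Fin n → ℤ)
    (f : MvPolynomial (Fin m) K) : Prop :=
  f ∈ toricIdeal K A ∧
    ∀ S, IsBinomialSet K A S → Ideal.span S = toricIdeal K A → f ∈ S ∨ -f ∈ S

/-- The number of minimal systems of binomial generators of `I_A`, where the
sign of a binomial does not count (a system is recorded as the set of its
sign-pairs `{f, -f}`). -/
def nuIA (K : Type*) [Field K] {m n : ℕ} (A : Fin m → Fin n → ℤ) : ℕ :=
  Set.ncard {U : Set (Set (MvPolynomial (Fin m) K)) |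
    ∃ S, IsMinimalGenSet K A S ∧ U = (fun f => ({f, -f} : Set (MvPolynomial (Fin m) K))) '' S}

/-- The number of elements of `A`-degree `b` in the generating set `S`. -/
def betti0 (K : Type*) [Field K] {m n : ℕ} (A : Fin m → Fin n → ℤ)
    (S : Set (MvPolynomial (Fin m) K)) (b : Fin n → ℤ) : ℕ :=
  Set.ncard {f ∈ S | ∃ u v : Fin m →₀ ℕ, degA A u = b ∧ degA A v = b ∧
    f = monomial u (1 : K) - monomial v 1}

/-- The set of exponents of monomials of the monomial ideal `M_A`. -/
def MAset {m n : ℕ} (A : Fin m → Fin n → ℤ) : Set (Fin m →₀ ℕ) :=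
  {u | ∃ v : Fin m →₀ ℕ, v ≠ u ∧ degA A v = degA A u}

/-- The minimal monomial generating set `T_A` of `M_A` (monomials of `M_A`
minimal under divisibility). -/
def TA {m n : ℕ} (A : Fin m → Fin n → ℤ) : Set (Fin m →₀ ℕ) :=
  {u ∈ MAset A | ∀ w ∈ MAset A, (∀ i, w i ≤ u i) → w = u}

/-!
A set `S` of binomials generates `I_A` only if the moves `c + u ↔ c + v` (with `x^u - x^v ∈ S`)
connect every fiber of `deg_A`: the map sending a monomial to the move-component of its exponent
kills the ideal generated by `S`.

If the indispensable binomials generate `I_A`, every element of a minimal generating set is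
indispensable. An indispensable `x^u - x^v` has fiber `{u, v}` and no common monomial factor, since
otherwise it lies in the ideal of the other binomials; so no binomial degree lies strictly below
its degree, and `±(x^u - x^v)` is the only generator of that degree.

Conversely, let `x^u - x^v` be the unique generator of degree `b` of a minimal generating set. If
`b ≠ 0`, minimality of `b` leaves only untranslated binomials of degree `b` as moves inside the
fiber of `b`; hence that fiber is `{u, v}` and every generating set contains `±(x^u - x^v)`. If
`b = 0`, pointedness makes the generator `±(x^w - 1)`, and replacing it by `x^{2w} - 1` and
`x^{3w} - 1` gives a minimal generating set with two elements of degree `0`.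
-/

section Binomial

variable {σ R : Type*} [CommRing R]

abbrev binom (R : Type*) [CommRing R] {σ : Type*} (u v : σ →₀ ℕ) : MvPolynomial σ R :=
  monomial u 1 - monomial v 1

theorem binom_self (u : σ →₀ ℕ) : binom R u u = 0 := sub_self _

theorem neg_binom (u v : σ →₀ ℕ) : -binom R u v = binom R v u := neg_sub _ _

theorem monomial_mul_binom (c u v : σ →₀ ℕ) (a : R) :
    monomial c a * binom R u v = monomial (c + u) a - monomial (c + v) a := by
  simp only [binom, mul_sub, monomial_mul, mul_one]

theorem binom_zero_mem_span_nsmul (w : σ →₀ ℕ) :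
    binom R w 0 ∈ Ideal.span {binom R (2 • w) 0, binom R (3 • w) 0} := by
  have h : binom R w 0 = binom R (3 • w) 0 - monomial w 1 * binom R (2 • w) 0 := by
    rw [monomial_mul_binom, add_zero, ← succ_nsmul']
    exact (sub_sub_sub_cancel_left _ _ _).symm
  rw [h]
  exact sub_mem (Ideal.subset_span (by simp))
    (Ideal.mul_mem_left _ _ (Ideal.subset_span (by simp)))

variable [Nontrivial R]

theorem mem_support_binom {u v w : σ →₀ ℕ} (huv : u ≠ v) :
    w ∈ (binom R u v).support ↔ w = u ∨ w = v := by
  classical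
  rw [mem_support_iff, coeff_sub, coeff_monomial, coeff_monomial]
  by_cases hu : w = u
  · subst hu; simp [Ne.symm huv]
  · by_cases hv : w = v
    · subst hv; simp [huv]
    · simp [Ne.symm hu, Ne.symm hv, hu, hv]

theorem binom_ne_zero {u v : σ →₀ ℕ} (huv : u ≠ v) : binom R u v ≠ 0 := by
  intro h
  have := (mem_support_binom (R := R) (w := u) huv).2 (Or.inl rfl)
  simp [h] at this

theorem eq_and_eq_or_of_binom_eq {p q u v : σ →₀ ℕ} (hpq : p ≠ q)
    (h : binom R p q = binom R u v) : p = u ∧ q = v ∨ p = v ∧ q = u := by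
  have huv : u ≠ v := by
    rintro rfl
    exact binom_ne_zero hpq (h.trans (binom_self u))
  have hsupp : ({p, q} : Set (σ →₀ ℕ)) = {u, v} := by
    ext w
    simpa [← mem_support_binom (R := R) hpq, ← mem_support_binom (R := R) huv] using
      congrArg (w ∈ ·.support) h
  exact Set.pair_eq_pair_iff.1 hsupp

def IsMove (S : Set (MvPolynomial σ R)) (p q : σ →₀ ℕ) : Prop :=
  ∃ c u v, binom R u v ∈ S ∧ p = c + u ∧ q = c + v

theorem eqvGen_isMove_of_binom_mem_span {S : Set (MvPolynomial σ R)}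
    (hS : ∀ g ∈ S, ∃ u v, g = binom R u v) {u v : σ →₀ ℕ}
    (h : binom R u v ∈ Ideal.span S) : Relation.EqvGen (IsMove S) u v := by
  let ψ := AddMonoidAlgebra.mapDomainLinearMap R R (Quot.mk (IsMove S))
  have hψ (w : σ →₀ ℕ) (a : R) : ψ (monomial w a) = AddMonoidAlgebra.single (Quot.mk _ w) a := by
    simp [ψ, monomial]
  have hkill : ∀ f ∈ Ideal.span S, ∀ g, ψ (g * f) = 0 := by
    intro f hf
    induction hf using Submodule.span_induction with
    | mem f hf =>
      obtain ⟨p, q, rfl⟩ := hS f hf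
      intro g
      induction g using MvPolynomial.induction_on' with
      | monomial c a =>
        rw [monomial_mul_binom, map_sub, hψ, hψ,
          Quot.sound (⟨c, p, q, hf, rfl, rfl⟩ : IsMove S (c + p) (c + q)), sub_self]
      | add g₁ g₂ h₁ h₂ => rw [add_mul, map_add, h₁, h₂, add_zero]
    | zero => simp
    | add f₁ f₂ _ _ h₁ h₂ => intro g; rw [mul_add, map_add, h₁, h₂, add_zero]
    | smul r f _ hf => intro g; rw [smul_eq_mul, ← mul_assoc]; exact hf _
  have h0 := hkill _ h 1
  rw [one_mul, map_sub, hψ, hψ, sub_eq_zero, AddMonoidAlgebra.single_left_inj one_ne_zero] at h0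
  exact Quot.eqvGen_exact h0

end Binomial

section ToricIdeal

variable {K : Type*} [Field K] {m n : ℕ} {A : Fin m → Fin n → ℤ}

theorem degA_add (u v : Fin m →₀ ℕ) : degA A (u + v) = degA A u + degA A v := by
  simp [degA, add_smul, Finset.sum_add_distrib]

theorem degA_zero : degA A (0 : Fin m →₀ ℕ) = 0 := by
  simp [degA]

theorem degA_nsmul (k : ℕ) (u : Fin m →₀ ℕ) : degA A (k • u) = k • degA A u := by
  simp [degA, Finset.smul_sum, mul_smul]

theorem IsPointed.degA_eq_zero_of_add (hA : IsPointed A) {c p : Fin m →₀ ℕ}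
    (h : degA A (c + p) = 0) : degA A p = 0 :=
  hA p c (by rw [add_comm, ← degA_add, h])

def binomials (K : Type*) [Field K] {m n : ℕ} (A : Fin m → Fin n → ℤ) :
    Set (MvPolynomial (Fin m) K) :=
  {f | ∃ u v : Fin m →₀ ℕ, degA A u = degA A v ∧ f = binom K u v}

theorem binom_mem_binomials {u v : Fin m →₀ ℕ} (h : degA A u = degA A v) :
    binom K u v ∈ binomials K A :=
  ⟨u, v, h, rfl⟩

theorem neg_mem_binomials {f : MvPolynomial (Fin m) K} (hf : f ∈ binomials K A) :
    -f ∈ binomials K A := by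
  obtain ⟨u, v, h, rfl⟩ := hf
  exact ⟨v, u, h.symm, neg_binom u v⟩

theorem degA_eq_of_binom_mem_binomials {u v : Fin m →₀ ℕ} (huv : u ≠ v)
    (h : binom K u v ∈ binomials K A) : degA A u = degA A v := by
  obtain ⟨p, q, hpq, heq⟩ := h
  rcases eq_and_eq_or_of_binom_eq huv heq with ⟨rfl, rfl⟩ | ⟨rfl, rfl⟩
  · exact hpq
  · exact hpq.symm

theorem eqvGen_isMove_of_span_eq {S : Set (MvPolynomial (Fin m) K)} (hS : S ⊆ binomials K A)
    (hspan : Ideal.span S = toricIdeal K A) {u v : Fin m →₀ ℕ} (h : degA A u = degA A v) :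
    Relation.EqvGen (IsMove S) u v := by
  refine eqvGen_isMove_of_binom_mem_span (fun g hg => ?_) ?_
  · obtain ⟨p, q, -, rfl⟩ := hS hg
    exact ⟨p, q, rfl⟩
  · rw [hspan]
    exact Ideal.subset_span (binom_mem_binomials h)

theorem eq_of_forall_isMove {α : Type*} {S : Set (MvPolynomial (Fin m) K)}
    (hS : S ⊆ binomials K A) (hspan : Ideal.span S = toricIdeal K A) {b : Fin n → ℤ}
    (φ : (Fin m →₀ ℕ) → α)
    (hφ : ∀ c u v, binom K u v ∈ S → u ≠ v → degA A u = degA A v → degA A (c + u) = b →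
      φ (c + u) = φ (c + v))
    {p q : Fin m →₀ ℕ} (hp : degA A p = b) (hq : degA A q = b) : φ p = φ q := by
  suffices ∀ x y, Relation.EqvGen (IsMove S) x y →
      degA A x = degA A y ∧ (degA A x = b → φ x = φ y) from
    (this p q (eqvGen_isMove_of_span_eq hS hspan (hp.trans hq.symm))).2 hp
  intro x y hxy
  induction hxy with
  | rel x y hxy =>
    obtain ⟨c, u, v, hmem, rfl, rfl⟩ := hxy
    by_cases huv : u = v
    · subst huv; exact ⟨rfl, fun _ => rfl⟩
    have hdeg := degA_eq_of_binom_mem_binomials huv (hS hmem)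
    exact ⟨by rw [degA_add, degA_add, hdeg], hφ c u v hmem huv hdeg⟩
  | refl x => exact ⟨rfl, fun _ => rfl⟩
  | symm x y _ ih => exact ⟨ih.1.symm, fun hy => (ih.2 (ih.1.trans hy)).symm⟩
  | trans x y z _ _ ih₁ ih₂ =>
    exact ⟨ih₁.1.trans ih₂.1, fun hx => (ih₁.2 hx).trans (ih₂.2 (ih₁.1 ▸ hx))⟩

namespace IsMinimalGenSet

variable {S : Set (MvPolynomial (Fin m) K)} {f : MvPolynomial (Fin m) K}

theorem notMem_span_sdiff (hS : IsMinimalGenSet K A S) (hf : f ∈ S) :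
    f ∉ Ideal.span (S \ {f}) := by
  intro hspan
  refine hS.2.2 (S \ {f}) (Set.sdiff_singleton_ssubset.2 hf) ?_
  have := Submodule.span_insert_eq_span hspan
  rw [Set.insert_sdiff_self_of_mem hf] at this
  exact this.symm.trans hS.2.1

theorem zero_notMem (hS : IsMinimalGenSet K A S) : (0 : MvPolynomial (Fin m) K) ∉ S :=
  fun h => hS.notMem_span_sdiff h (zero_mem _)

theorem neg_eq_of_neg_mem (hS : IsMinimalGenSet K A S) (hf : f ∈ S) (hnf : -f ∈ S) : -f = f := by
  by_contra hne
  have : -(-f) ∈ Ideal.span (S \ {f}) := neg_mem (Ideal.subset_span ⟨hnf, hne⟩)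
  exact hS.notMem_span_sdiff hf (by rwa [neg_neg] at this)

theorem exists_eq_binom (hS : IsMinimalGenSet K A S) (hf : f ∈ S) :
    ∃ u v, u ≠ v ∧ degA A u = degA A v ∧ f = binom K u v := by
  obtain ⟨u, v, hdeg, rfl⟩ := hS.1 f hf
  refine ⟨u, v, fun huv => hS.zero_notMem ?_, hdeg, rfl⟩
  rwa [huv, sub_self] at hf

end IsMinimalGenSet

/-- By noetherianity `S` contains a finite generating set, and the generating subsets of a finite
set have a minimal element. -/
theorem exists_isMinimalGenSet_subset {S : Set (MvPolynomial (Fin m) K)}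
    (hS : S ⊆ binomials K A) (hspan : Ideal.span S = toricIdeal K A) :
    ∃ T ⊆ S, IsMinimalGenSet K A T := by
  obtain ⟨T₀, hT₀S, hT₀⟩ := (Submodule.fg_span_iff_fg_span_finset_subset S).1
    (IsNoetherian.noetherian (Ideal.span S))
  obtain ⟨T, ⟨hTT₀, hT⟩, hmin⟩ :=
    ((T₀.finite_toSet.finite_subsets).subset fun (T : Set (MvPolynomial (Fin m) K)) h => h.1 :
      {T | T ⊆ ↑T₀ ∧ Ideal.span T = toricIdeal K A}.Finite).exists_minimal
      ⟨T₀, subset_rfl, hT₀.symm.trans hspan⟩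
  refine ⟨T, hTT₀.trans hT₀S, fun f hf => hS (hT₀S (hTT₀ hf)), hT, fun T' hT' hspan' => ?_⟩
  exact hT'.2 (hmin ⟨hT'.1.trans hTT₀, hspan'⟩ hT'.1)

theorem exists_isMinimalGenSet : ∃ S, IsMinimalGenSet K A S := by
  obtain ⟨S, -, hS⟩ :=
    exists_isMinimalGenSet_subset (K := K) (A := A) subset_rfl rfl
  exact ⟨S, hS⟩

theorem eq_pair_of_ne {α : Type*} {p q u v : α} (hp : p = u ∨ p = v) (hq : q = u ∨ q = v)
    (hpq : p ≠ q) : p = u ∧ q = v ∨ p = v ∧ q = u := by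
  rcases hp with rfl | rfl <;> rcases hq with rfl | rfl <;> simp_all

theorem binom_mem_binomials_sdiff {p q u v : Fin m →₀ ℕ} (hdeg : degA A p = degA A q)
    (hpq : p ≠ q) (hne : ¬(p = u ∧ q = v ∨ p = v ∧ q = u)) :
    binom K p q ∈ binomials K A \ {binom K u v, -binom K u v} := by
  refine ⟨binom_mem_binomials hdeg, ?_⟩
  rintro (h | h)
  · exact hne (eq_and_eq_or_of_binom_eq hpq h)
  · rw [neg_binom] at h
    exact hne (eq_and_eq_or_of_binom_eq hpq h).symm

theorem not_isIndispensableBinomial_of_mem_span {f : MvPolynomial (Fin m) K}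
    (hf : f ∈ Ideal.span (binomials K A \ {f, -f})) : ¬IsIndispensableBinomial K A f := by
  intro h
  have hspan : Ideal.span (binomials K A \ {f, -f}) = toricIdeal K A := by
    refine le_antisymm (Ideal.span_mono Set.sdiff_subset) (Ideal.span_le.2 fun g hg => ?_)
    by_cases hgf : g = f
    · exact hgf ▸ hf
    by_cases hgnf : g = -f
    · exact hgnf ▸ neg_mem hf
    exact Ideal.subset_span ⟨hg, by simp [hgf, hgnf]⟩
  rcases h.2 _ (fun g hg => hg.1) hspan with hmem | hmem
  · exact hmem.2 (by simp)
  · exact hmem.2 (by simp)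

namespace IsIndispensableBinomial

variable {f : MvPolynomial (Fin m) K} {c p q u v w : Fin m →₀ ℕ}

theorem neg (h : IsIndispensableBinomial K A f) : IsIndispensableBinomial K A (-f) :=
  ⟨neg_mem h.1, fun S hS hspan => by simpa [or_comm] using h.2 S hS hspan⟩

theorem mem_binomials (h : IsIndispensableBinomial K A f) : f ∈ binomials K A := by
  rcases h.2 (binomials K A) (fun _ hf => hf) rfl with hf | hf
  · exact hf
  · simpa using neg_mem_binomials hf

theorem degA_eq (h : IsIndispensableBinomial K A (binom K u v)) (huv : u ≠ v) :
    degA A u = degA A v :=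
  degA_eq_of_binom_mem_binomials huv h.mem_binomials

theorem eq_zero_of_binom_add (h : IsIndispensableBinomial K A (binom K (c + p) (c + q)))
    (hpq : p ≠ q) : c = 0 := by
  by_contra hc
  have hdeg : degA A p = degA A q := by
    have := h.degA_eq (fun h' => hpq (add_left_cancel h'))
    rwa [degA_add, degA_add, add_right_inj] at this
  refine not_isIndispensableBinomial_of_mem_span ?_ h
  have hne : ¬(p = c + p ∧ q = c + q ∨ p = c + q ∧ q = c + p) := by
    rintro (⟨h₁, -⟩ | ⟨h₁, h₂⟩)
    · exact hc (add_eq_right.1 h₁.symm)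
    · rw [h₂, ← add_assoc] at h₁
      exact hc (eq_zero_of_add_right (add_eq_right.1 h₁.symm))
  have := Ideal.mul_mem_left _ (monomial c 1)
    (Ideal.subset_span (binom_mem_binomials_sdiff (K := K) hdeg hpq hne))
  rwa [monomial_mul_binom] at this

theorem eq_or_eq_of_degA_eq (h : IsIndispensableBinomial K A (binom K u v)) (huv : u ≠ v)
    (hw : degA A w = degA A u) : w = u ∨ w = v := by
  by_contra hw'
  simp only [not_or] at hw'
  have hdeg := h.degA_eq huv
  refine not_isIndispensableBinomial_of_mem_span ?_ h
  have := add_mem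
    (Ideal.subset_span (binom_mem_binomials_sdiff (K := K) (u := u) (v := v) hw.symm (Ne.symm hw'.1)
      (by rintro (⟨-, h'⟩ | ⟨h', -⟩) <;> simp_all)))
    (Ideal.subset_span (binom_mem_binomials_sdiff (hw.trans hdeg) hw'.2
      (by rintro (⟨h', -⟩ | ⟨h', -⟩) <;> simp_all)))
  rwa [sub_add_sub_cancel] at this

end IsIndispensableBinomial

theorem IsMinimalGenSet.isIndispensableBinomial
    (hInd : Ideal.span {f | IsIndispensableBinomial K A f} = toricIdeal K A)
    {S : Set (MvPolynomial (Fin m) K)} (hS : IsMinimalGenSet K A S)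
    {f : MvPolynomial (Fin m) K} (hf : f ∈ S) :
    IsIndispensableBinomial K A f := by
  by_contra hnot
  refine hS.notMem_span_sdiff hf ?_
  suffices toricIdeal K A ≤ Ideal.span (S \ {f}) from this (hS.2.1 ▸ Ideal.subset_span hf)
  rw [← hInd]
  refine Ideal.span_le.2 fun g hg => ?_
  rcases hg.2 S hS.1 hS.2.1 with hgS | hgS
  · exact Ideal.subset_span ⟨hgS, fun hgf => hnot (hgf ▸ hg)⟩
  · have : -(-g) ∈ Ideal.span (S \ {f}) :=
      neg_mem (Ideal.subset_span ⟨hgS, fun hgf => hnot (hgf ▸ hg.neg)⟩)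
    rwa [neg_neg] at this

theorem IsBettiDegree.exists_fiber_eq_pair
    (hInd : Ideal.span {f | IsIndispensableBinomial K A f} = toricIdeal K A)
    {b : Fin n → ℤ} (hb : IsBettiDegree K A b) :
    ∃ u v, u ≠ v ∧ IsIndispensableBinomial K A (binom K u v) ∧
      ∀ w, degA A w = b ↔ w = u ∨ w = v := by
  obtain ⟨S, hS, u, v, hu, hv, hmem⟩ := hb
  have huv : u ≠ v := by
    rintro rfl
    exact hS.zero_notMem (by rwa [sub_self] at hmem)
  have hind := hS.isIndispensableBinomial hInd hmem
  refine ⟨u, v, huv, hind, fun w => ⟨fun hw => hind.eq_or_eq_of_degA_eq huv (hw.trans hu.symm), ?_⟩⟩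
  rintro (rfl | rfl)
  exacts [hu, hv]

theorem IsBettiDegree.isMinimalBinomialDegree
    (hInd : Ideal.span {f | IsIndispensableBinomial K A f} = toricIdeal K A)
    {b : Fin n → ℤ} (hb : IsBettiDegree K A b) :
    IsMinimalBinomialDegree A b := by
  obtain ⟨u, v, huv, hind, hfib⟩ := hb.exists_fiber_eq_pair hInd
  refine ⟨⟨u, v, huv, (hfib u).2 (Or.inl rfl), (hfib v).2 (Or.inr rfl)⟩, ?_⟩
  rintro c ⟨p, q, hpq, hp, hq⟩ ⟨⟨-, ⟨w, rfl⟩, hb⟩, hcb⟩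
  have hwp := (hfib (w + p)).1 (by rw [degA_add, hp, hb, add_comm])
  have hwq := (hfib (w + q)).1 (by rw [degA_add, hq, hb, add_comm])
  have hw : w = 0 := by
    rcases eq_pair_of_ne hwp hwq fun h => hpq (add_left_cancel h) with ⟨hu, hv⟩ | ⟨hv, hu⟩
    · exact (hu ▸ hv ▸ hind).eq_zero_of_binom_add hpq
    · exact (hu ▸ hv ▸ hind).eq_zero_of_binom_add hpq.symm
  exact hcb (by rw [hb, hw, degA_zero, add_zero])

theorem IsMinimalGenSet.betti0_eq_one {S : Set (MvPolynomial (Fin m) K)}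
    (hS : IsMinimalGenSet K A S) {b : Fin n → ℤ} {u v : Fin m →₀ ℕ} (huv : u ≠ v)
    (hfib : ∀ w, degA A w = b ↔ w = u ∨ w = v) (hmem : binom K u v ∈ S) :
    betti0 K A S b = 1 := by
  refine Set.ncard_eq_one.2 ⟨binom K u v, Set.eq_singleton_iff_unique_mem.2
    ⟨⟨hmem, u, v, (hfib u).2 (Or.inl rfl), (hfib v).2 (Or.inr rfl), rfl⟩, ?_⟩⟩
  rintro _ ⟨hg, p, q, hp, hq, rfl⟩
  have hpq : p ≠ q := by
    rintro rfl
    exact hS.zero_notMem (by rwa [sub_self] at hg)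
  rcases eq_pair_of_ne ((hfib p).1 hp) ((hfib q).1 hq) hpq with ⟨rfl, rfl⟩ | ⟨rfl, rfl⟩
  · rfl
  · have := hS.neg_eq_of_neg_mem hmem ((neg_binom (R := K) q p).symm ▸ hg)
    rwa [neg_binom] at this

theorem IsBettiDegree.betti0_eq_one
    (hInd : Ideal.span {f | IsIndispensableBinomial K A f} = toricIdeal K A)
    {S : Set (MvPolynomial (Fin m) K)} (hS : IsMinimalGenSet K A S) {b : Fin n → ℤ}
    (hb : IsBettiDegree K A b) : betti0 K A S b = 1 := by
  obtain ⟨u, v, huv, hind, hfib⟩ := hb.exists_fiber_eq_pair hInd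
  rcases hind.2 S hS.1 hS.2.1 with hmem | hmem
  · exact hS.betti0_eq_one huv hfib hmem
  · rw [neg_binom] at hmem
    exact hS.betti0_eq_one huv.symm (fun w => (hfib w).trans or_comm) hmem

theorem binom_eq_of_betti0_eq_one {S : Set (MvPolynomial (Fin m) K)} (hS : S ⊆ binomials K A)
    {u v p q : Fin m →₀ ℕ} (h : betti0 K A S (degA A u) = 1) (hmem : binom K u v ∈ S)
    (hdeg : degA A u = degA A v) (hpq : p ≠ q) (hpqS : binom K p q ∈ S)
    (hp : degA A p = degA A u) : binom K p q = binom K u v := by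
  obtain ⟨x, hx⟩ := Set.ncard_eq_one.1 h
  have hux : binom K u v ∈ ({x} : Set _) := hx ▸ ⟨hmem, u, v, rfl, hdeg.symm, rfl⟩
  have hpx : binom K p q ∈ ({x} : Set _) := hx ▸
    ⟨hpqS, p, q, hp, (degA_eq_of_binom_mem_binomials hpq (hS hpqS)).symm.trans hp, rfl⟩
  exact hpx.trans hux.symm

theorem IsMinimalBinomialDegree.eq_zero_of_degA_add {b : Fin n → ℤ}
    (hb : IsMinimalBinomialDegree A b) (hb0 : b ≠ 0) {c u v : Fin m →₀ ℕ} (huv : u ≠ v)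
    (hdeg : degA A u = degA A v) (h : degA A (c + u) = b) : c = 0 ∧ degA A u = b := by
  have hu : degA A u = b := by
    by_contra hne
    exact hb.2 (degA A u) ⟨u, v, huv, rfl, hdeg.symm⟩
      ⟨⟨degA A c, ⟨c, rfl⟩, by rw [← h, degA_add, add_comm]⟩, hne⟩
  refine ⟨?_, hu⟩
  by_contra hc
  have hc0 : degA A c = 0 := by rwa [degA_add, hu, add_eq_right] at h
  exact hb.2 0 ⟨c, 0, hc, hc0, degA_zero⟩ ⟨⟨b, ⟨c + u, h⟩, (zero_add b).symm⟩, Ne.symm hb0⟩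

section NonzeroDegree

variable {S : Set (MvPolynomial (Fin m) K)} {u v : Fin m →₀ ℕ}

theorem eq_or_eq_of_binom_eq_of_isMinimalBinomialDegree (hS : S ⊆ binomials K A)
    (hspan : Ideal.span S = toricIdeal K A) (hb : IsMinimalBinomialDegree A (degA A u))
    (hb0 : degA A u ≠ 0)
    (huniq : ∀ p q, binom K p q ∈ S → p ≠ q → degA A p = degA A u → binom K p q = binom K u v)
    {w : Fin m →₀ ℕ} (hw : degA A w = degA A u) : w = u ∨ w = v := by
  refine (eq_of_forall_isMove hS hspan (fun x => x = u ∨ x = v) ?_ hw rfl).mpr (Or.inl rfl)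
  intro c p q hmem hpq hdeg hcp
  obtain ⟨rfl, hp⟩ := hb.eq_zero_of_degA_add hb0 hpq hdeg hcp
  rw [zero_add, zero_add]
  rcases eq_and_eq_or_of_binom_eq hpq (huniq p q hmem hpq hp) with ⟨rfl, rfl⟩ | ⟨rfl, rfl⟩ <;>
    simp

theorem isIndispensableBinomial_of_isMinimalBinomialDegree
    (hb : IsMinimalBinomialDegree A (degA A u)) (hb0 : degA A u ≠ 0) (huv : u ≠ v)
    (hdeg : degA A u = degA A v) (hfib : ∀ w, degA A w = degA A u → w = u ∨ w = v) :
    IsIndispensableBinomial K A (binom K u v) := by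
  refine ⟨Ideal.subset_span (binom_mem_binomials hdeg), fun T hT hspan => ?_⟩
  by_contra hno
  simp only [not_or] at hno
  refine huv (eq_of_forall_isMove hT hspan id (fun c p q hmem hpq hdpq hcp => ?_) rfl hdeg.symm)
  obtain ⟨rfl, hp⟩ := hb.eq_zero_of_degA_add hb0 hpq hdpq hcp
  exfalso
  rcases eq_pair_of_ne (hfib p hp) (hfib q (hdpq.symm.trans hp)) hpq with ⟨rfl, rfl⟩ | ⟨rfl, rfl⟩
  · exact hno.1 hmem
  · exact hno.2 (by rwa [neg_binom])

end NonzeroDegree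

section ZeroDegree

variable {S : Set (MvPolynomial (Fin m) K)}

theorem IsPointed.eq_zero_or_eq_zero (hA : IsPointed A) (hS : S ⊆ binomials K A)
    (hspan : Ideal.span S = toricIdeal K A) {u v : Fin m →₀ ℕ} (huv : u ≠ v)
    (huniq : ∀ p q, binom K p q ∈ S → p ≠ q → degA A p = 0 → binom K p q = binom K u v)
    (hu : degA A u = 0) : u = 0 ∨ v = 0 := by
  by_contra h
  simp only [not_or] at h
  refine h.1 ((eq_of_forall_isMove hS hspan (· = 0) (fun c p q hmem hpq _ hcp => ?_)
    degA_zero hu).mp rfl)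
  rcases eq_and_eq_or_of_binom_eq hpq (huniq p q hmem hpq (hA.degA_eq_zero_of_add hcp)) with
    ⟨rfl, rfl⟩ | ⟨rfl, rfl⟩ <;> simp [h.1, h.2]

/-- By pointedness a move ending in the fiber of `0` translates a degree-`0` binomial of `S`,
here `c + k ↔ c`, which preserves the `i`-th coordinate modulo `k i`. -/
theorem IsPointed.dvd_of_forall_binom_eq (hA : IsPointed A) (hS : S ⊆ binomials K A)
    (hspan : Ideal.span S = toricIdeal K A) {k : Fin m →₀ ℕ}
    (hk : ∀ p q, binom K p q ∈ S → p ≠ q → degA A p = 0 → binom K p q = binom K k 0)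
    {w : Fin m →₀ ℕ} (hw : degA A w = 0) (i : Fin m) : k i ∣ w i := by
  have := eq_of_forall_isMove hS hspan (fun x => x i % k i)
    (fun c p q hmem hpq _ hcp => ?_) hw degA_zero
  · simpa [Nat.dvd_iff_mod_eq_zero] using this
  · rcases eq_and_eq_or_of_binom_eq hpq (hk p q hmem hpq (hA.degA_eq_zero_of_add hcp)) with
      ⟨rfl, rfl⟩ | ⟨rfl, rfl⟩ <;> simp

theorem IsPointed.binom_nsmul_mem (hA : IsPointed A) (hS : S ⊆ binomials K A)
    (hspan : Ideal.span S = toricIdeal K A) {w : Fin m →₀ ℕ} (hw : degA A w = 0)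
    (hw0 : w ≠ 0) {j j' : ℕ} (hj' : 2 ≤ j')
    (hdeg0 : ∀ p q, binom K p q ∈ S → p ≠ q → degA A p = 0 →
      binom K p q = binom K (j • w) 0 ∨ binom K p q = binom K (j' • w) 0) :
    binom K (j • w) 0 ∈ S := by
  by_contra hj
  obtain ⟨i, hi⟩ : ∃ i, w i ≠ 0 := Finsupp.ne_iff.1 hw0
  have hdvd := hA.dvd_of_forall_binom_eq hS hspan (k := j' • w)
    (fun p q hmem hpq hp => (hdeg0 p q hmem hpq hp).resolve_left fun h => hj (h ▸ hmem)) hw i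
  rw [Finsupp.smul_apply, smul_eq_mul] at hdvd
  exact hi (Nat.eq_zero_of_dvd_of_lt hdvd
    (lt_mul_of_one_lt_left (Nat.pos_of_ne_zero hi) (by omega)))

/-- Replacing the unique degree-`0` generator `±(x^w - 1)` by `x^{2w} - 1` and `x^{3w} - 1` and
shrinking to a minimal generating set keeps both new binomials, since a single one of them would
only connect exponents whose coordinates agree modulo `2 w` or `3 w`. -/
theorem IsPointed.exists_betti0_zero_ne_one (hA : IsPointed A) (hS : IsMinimalGenSet K A S)
    {u v : Fin m →₀ ℕ} (hmem : binom K u v ∈ S) (huv : u ≠ v) (hu : degA A u = 0)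
    (huniq : ∀ p q, binom K p q ∈ S → p ≠ q → degA A p = 0 → binom K p q = binom K u v) :
    ∃ T, IsMinimalGenSet K A T ∧ IsBettiDegree K A 0 ∧ betti0 K A T 0 ≠ 1 := by
  obtain ⟨w, hw0, hw, hfw⟩ : ∃ w : Fin m →₀ ℕ, w ≠ 0 ∧ degA A w = 0 ∧
      (binom K u v = binom K w 0 ∨ binom K u v = -binom K w 0) := by
    have hv := (degA_eq_of_binom_mem_binomials huv (hS.1 _ hmem)).symm.trans hu
    rcases hA.eq_zero_or_eq_zero hS.1 hS.2.1 huv huniq hu with rfl | rfl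
    · exact ⟨v, huv.symm, hv, Or.inr (neg_binom _ _).symm⟩
    · exact ⟨u, huv, hu, Or.inl rfl⟩
  have hg (j : ℕ) : binom K (j • w) 0 ∈ binomials K A :=
    binom_mem_binomials (by rw [degA_nsmul, hw, degA_zero, smul_zero])
  set S' := S \ {binom K u v} ∪ {binom K (2 • w) 0, binom K (3 • w) 0}
  have hS' : S' ⊆ binomials K A := by
    rintro f (⟨hf, -⟩ | rfl | rfl)
    exacts [hS.1 f hf, hg 2, hg 3]
  have hspan : Ideal.span S' = toricIdeal K A := by
    refine le_antisymm (Ideal.span_mono hS') ?_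
    rw [← hS.2.1]
    refine Ideal.span_le.2 fun f hf => ?_
    by_cases hfuv : f = binom K u v
    · have : binom K w 0 ∈ Ideal.span S' :=
        Ideal.span_mono Set.subset_union_right (binom_zero_mem_span_nsmul w)
      rcases hfw with h | h <;> rw [hfuv, h]
      exacts [this, neg_mem this]
    · exact Ideal.subset_span (Or.inl ⟨hf, hfuv⟩)
  obtain ⟨T, hTS', hT⟩ := exists_isMinimalGenSet_subset hS' hspan
  have hdeg0 (p q : Fin m →₀ ℕ) (hpqT : binom K p q ∈ T) (hpq : p ≠ q) (hp : degA A p = 0) :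
      binom K p q = binom K (2 • w) 0 ∨ binom K p q = binom K (3 • w) 0 := by
    rcases hTS' hpqT with ⟨hpqS, hne⟩ | h
    · exact absurd (huniq p q hpqS hpq hp) hne
    · exact h
  have h2 := hA.binom_nsmul_mem hT.1 hT.2.1 hw hw0 (by norm_num) hdeg0
  have h3 := hA.binom_nsmul_mem hT.1 hT.2.1 hw hw0 le_rfl fun p q hpqT hpq hp =>
    (hdeg0 p q hpqT hpq hp).symm
  have h2deg : degA A (2 • w) = 0 := by rw [degA_nsmul, hw, smul_zero]
  refine ⟨T, hT, ⟨T, hT, 2 • w, 0, h2deg, degA_zero, h2⟩, fun h => ?_⟩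
  obtain ⟨i, hi⟩ : ∃ i, w i ≠ 0 := Finsupp.ne_iff.1 hw0
  have hsmul_ne (j k : ℕ) (hjk : j ≠ k) : j • w ≠ k • w := fun h' =>
    hjk (by simpa [hi] using DFunLike.congr_fun h' i)
  have h30 : 3 • w ≠ 0 := by simpa using hsmul_ne 3 0 (by norm_num)
  have h32 := binom_eq_of_betti0_eq_one hT.1 (h2deg ▸ h) h2 (h2deg.trans degA_zero.symm) h30 h3
    (by rw [degA_nsmul, hw, smul_zero, h2deg])
  rcases eq_and_eq_or_of_binom_eq h30 h32 with ⟨h', -⟩ | ⟨h', -⟩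
  · exact hsmul_ne 3 2 (by norm_num) h'
  · exact h30 h'

end ZeroDegree

theorem IsMinimalGenSet.isIndispensableBinomial_of_betti (hA : IsPointed A)
    (hmin : ∀ b : Fin n → ℤ, IsBettiDegree K A b → IsMinimalBinomialDegree A b)
    (hone : ∀ S, IsMinimalGenSet K A S → ∀ b : Fin n → ℤ, IsBettiDegree K A b →
      betti0 K A S b = 1)
    {S : Set (MvPolynomial (Fin m) K)} (hS : IsMinimalGenSet K A S)
    {f : MvPolynomial (Fin m) K} (hf : f ∈ S) : IsIndispensableBinomial K A f := by
  obtain ⟨u, v, huv, hdeg, rfl⟩ := hS.exists_eq_binom hf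
  have hb : IsBettiDegree K A (degA A u) := ⟨S, hS, u, v, rfl, hdeg.symm, hf⟩
  have huniq (p q : Fin m →₀ ℕ) (hpqS : binom K p q ∈ S) (hpq : p ≠ q)
      (hp : degA A p = degA A u) : binom K p q = binom K u v :=
    binom_eq_of_betti0_eq_one hS.1 (hone S hS _ hb) hf hdeg hpq hpqS hp
  by_cases hb0 : degA A u = 0
  · obtain ⟨T, hT, hT0, hne⟩ := hA.exists_betti0_zero_ne_one hS hf huv hb0
      fun p q hpqS hpq hp => huniq p q hpqS hpq (hp.trans hb0.symm)
    exact absurd (hone T hT 0 hT0) hne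
  · exact isIndispensableBinomial_of_isMinimalBinomialDegree (hmin _ hb) hb0 huv hdeg
      fun w => eq_or_eq_of_binom_eq_of_isMinimalBinomialDegree hS.1 hS.2.1 (hmin _ hb) hb0 huniq

end ToricIdeal

/-- `I_A` is generated by its indispensable binomials if and only if every Betti
`A`-degree is a minimal binomial `A`-degree and all `A`-graded Betti numbers
equal `1`. -/
theorem statement12 {K : Type*} [Field K] {m n : ℕ} (A : Fin m → Fin n → ℤ)
    (hA : IsPointed A) :
    Ideal.span {f | IsIndispensableBinomial K A f} = toricIdeal K A ↔
      ((∀ b : Fin n → ℤ, IsBettiDegree K A b → IsMinimalBinomialDegree A b) ∧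
       ∀ S, IsMinimalGenSet K A S →
         ∀ b : Fin n → ℤ, IsBettiDegree K A b → betti0 K A S b = 1) := by
  constructor
  · intro hInd
    exact ⟨fun b hb => hb.isMinimalBinomialDegree hInd,
      fun S hS b hb => hb.betti0_eq_one hInd hS⟩
  · rintro ⟨hmin, hone⟩
    obtain ⟨S, hS⟩ := exists_isMinimalGenSet (K := K) (A := A)
    refine le_antisymm (Ideal.span_le.2 fun f hf => hf.1) ?_
    rw [← hS.2.1]
    exact Ideal.span_mono fun f hf => hS.isIndispensableBinomial_of_betti hA hmin hone hf
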